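/- (Optimality of the multi-rank truncation / t-SVDMII.) Let M = c • W with c ∈ ℂ, c ≠ 0 and W ∈ Matrix.unitaryGroup (Fin n) ℂ, let A = U ⋆_M S ⋆_M Vᴴ be a t-SVDM of an m×p×n tensor A, and let ρ : Fin n → ℕ with ρ i ≤ min(m,p) for all i. Let A_ρ be the multi-rank-ρ truncation. Then ‖A − A_ρ‖_F² = (1/|c|²) ∑_{i} ∑_{j > ρ i} (σⱼ⁽ⁱ⁾)², and for every m×p×n tensor B such that the matrix rank of B̂ i is at most ρ i for every i, one has ‖A − A_ρ‖_F ≤ ‖A − B‖_F. -/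

import Mathlib

/-!
The transform `X ↦ X ×₃ (c • W)` scales the tensor Frobenius norm by `‖c‖` because `W` is
unitary, and in the transform domain everything is facewise: the `i`-th residual slice is
`Û i * (Ŝ i - leading ρ i block) * (V̂ i)ᴴ`, whose Frobenius norm is the tail of the singular
values. Optimality is Eckart–Young on each face, proved directly for a diagonal `S`: if `P` is the
orthogonal projection onto the column space of a matrix `C` of rank `≤ k` and `t_j = ‖P e_j‖²`,
then `‖S - C‖² ≥ ∑ σ_j² (1 - t_j)` column by column, while `0 ≤ t_j ≤ 1` and
`∑ t_j ≤ rank C ≤ k`; for nonincreasing `σ_j` such weights remove at most the `k` largest `σ_j²`.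
-/

open scoped BigOperators ComplexConjugate Matrix

noncomputable section

variable {R : Type*}

/-- Mode-3 product of a third-order tensor (encoded by its frontal slices)
with a transform matrix: `(A ×₃ M) i = ∑ j, (M i j) • (A j)`. -/
def mode3 [RCLike R] {ι α β : Type*} [Fintype ι]
    (A : ι → Matrix α β R) (M : Matrix ι ι R) : ι → Matrix α β R :=
  fun i => ∑ j, M i j • A j

/-- Frobenius (entrywise ℓ²) norm of a matrix. -/
def fnorm [RCLike R] {α β : Type*} [Fintype α] [Fintype β] (A : Matrix α β R) : ℝ :=
  Real.sqrt (∑ a, ∑ b, ‖A a b‖ ^ 2)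

/-- Frobenius norm of a tensor: `‖A‖² = ∑ i, ‖A i‖²`. -/
def tnorm [RCLike R] {ι α β : Type*} [Fintype ι] [Fintype α] [Fintype β]
    (A : ι → Matrix α β R) : ℝ :=
  Real.sqrt (∑ i, fnorm (A i) ^ 2)

/-- The ⋆_M product: facewise product in the transform domain, then inverse transform. -/
def tprodM [RCLike R] {ι m p q : Type*} [Fintype ι] [DecidableEq ι] [Fintype p]
    (M : Matrix ι ι R) (A : ι → Matrix m p R) (B : ι → Matrix p q R) :
    ι → Matrix m q R :=
  mode3 (fun i => mode3 A M i * mode3 B M i) M⁻¹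

/-- Conjugate transpose of a tensor under ⋆_M. -/
def tconj [RCLike R] {ι m p : Type*} [Fintype ι] [DecidableEq ι]
    (M : Matrix ι ι R) (A : ι → Matrix m p R) : ι → Matrix p m R :=
  mode3 (fun i => (mode3 A M i)ᴴ) M⁻¹

/-- The identity tensor under ⋆_M. -/
def tId [RCLike R] (m : Type*) [DecidableEq m] {ι : Type*} [Fintype ι] [DecidableEq ι]
    (M : Matrix ι ι R) : ι → Matrix m m R :=
  mode3 (fun _ => (1 : Matrix m m R)) M⁻¹

/-- A square tensor `Q` is ⋆_M-unitary if `Qᴴ ⋆_M Q = Q ⋆_M Qᴴ = I`. -/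
def tUnitary [RCLike R] {ι m : Type*} [Fintype ι] [DecidableEq ι] [Fintype m] [DecidableEq m]
    (M : Matrix ι ι R) (Q : ι → Matrix m m R) : Prop :=
  tprodM M (tconj M Q) Q = tId m M ∧ tprodM M Q (tconj M Q) = tId m M

/-- A t-SVDM of `A`: a factorization `A = U ⋆_M S ⋆_M Vᴴ` with `U`, `V` ⋆_M-unitary and every
transform-domain slice `Ŝ i` diagonal with real, nonnegative, nonincreasing diagonal entries. -/
def IsTSVDM [RCLike R] {m p n : ℕ} (M : Matrix (Fin n) (Fin n) R)
    (A : Fin n → Matrix (Fin m) (Fin p) R)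
    (U : Fin n → Matrix (Fin m) (Fin m) R)
    (S : Fin n → Matrix (Fin m) (Fin p) R)
    (V : Fin n → Matrix (Fin p) (Fin p) R) : Prop :=
  A = tprodM M (tprodM M U S) (tconj M V) ∧
  tUnitary M U ∧ tUnitary M V ∧
  (∀ (i : Fin n) (a : Fin m) (b : Fin p), (a : ℕ) ≠ (b : ℕ) → mode3 S M i a b = 0) ∧
  (∀ (i : Fin n) (a : Fin m) (b : Fin p), (a : ℕ) = (b : ℕ) →
      ∃ r : ℝ, 0 ≤ r ∧ mode3 S M i a b = (r : R)) ∧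
  (∀ (i : Fin n) (a a' : Fin m) (b b' : Fin p), (a : ℕ) = (b : ℕ) → (a' : ℕ) = (b' : ℕ) →
      (a : ℕ) ≤ (a' : ℕ) →
      RCLike.re (mode3 S M i a' b') ≤ RCLike.re (mode3 S M i a b))

/-- Transform-domain slice of a truncation:
(first k columns of Û) * (leading k×k block of Ŝ) * (first k columns of V̂)ᴴ. -/
def truncSlice [RCLike R] {m p : ℕ} (k : ℕ) (Uh : Matrix (Fin m) (Fin m) R)
    (Sh : Matrix (Fin m) (Fin p) R) (Vh : Matrix (Fin p) (Fin p) R) :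
    Matrix (Fin m) (Fin p) R :=
  Matrix.of fun a b =>
    ∑ j : Fin m, ∑ l : Fin p,
      if (j : ℕ) < k ∧ (l : ℕ) < k then Uh a j * Sh j l * star (Vh b l) else 0

/-- The multi-rank-ρ truncation of a t-SVDM (use `ρ = fun _ => k` for the t-rank-k truncation). -/
def truncTensor [RCLike R] {m p n : ℕ} (M : Matrix (Fin n) (Fin n) R)
    (U : Fin n → Matrix (Fin m) (Fin m) R) (S : Fin n → Matrix (Fin m) (Fin p) R)
    (V : Fin n → Matrix (Fin p) (Fin p) R) (ρ : Fin n → ℕ) :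
    Fin n → Matrix (Fin m) (Fin p) R :=
  mode3 (fun i => truncSlice (ρ i) (mode3 U M i) (mode3 S M i) (mode3 V M i)) M⁻¹

/-- The permuted tensor `Aᴾ`: `(Aᴾ c) i j = (A i) c j`. -/
def tperm [RCLike R] {m p n : ℕ} (A : Fin n → Matrix (Fin m) (Fin p) R) :
    Fin m → Matrix (Fin n) (Fin p) R :=
  fun c => Matrix.of fun i j => A i c j

open Matrix

section Transform

variable [RCLike R] {ι α β γ : Type*} [Fintype ι]

lemma mode3_mode3 (A : ι → Matrix α β R) (M N : Matrix ι ι R) :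
    mode3 (mode3 A M) N = mode3 A (N * M) := by
  funext i
  simp only [mode3, Finset.smul_sum, smul_smul, mul_apply, Finset.sum_smul]
  exact Finset.sum_comm

lemma mode3_sub (A B : ι → Matrix α β R) (M : Matrix ι ι R) (i : ι) :
    mode3 (fun j => A j - B j) M i = mode3 A M i - mode3 B M i := by
  simp [mode3, smul_sub, Finset.sum_sub_distrib]

variable [DecidableEq ι] {M : Matrix ι ι R}

lemma mode3_one (A : ι → Matrix α β R) : mode3 A 1 = A := by
  funext i
  simp [mode3, one_apply]

lemma mode3_mode3_inv (hM : IsUnit M.det) (A : ι → Matrix α β R) :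
    mode3 (mode3 A M⁻¹) M = A := by
  rw [mode3_mode3, mul_nonsing_inv M hM, mode3_one]

lemma mode3_tprodM [Fintype β] (hM : IsUnit M.det) (A : ι → Matrix α β R)
    (B : ι → Matrix β γ R) (i : ι) : mode3 (tprodM M A B) M i = mode3 A M i * mode3 B M i := by
  rw [tprodM, mode3_mode3_inv hM]

lemma mode3_tconj (hM : IsUnit M.det) (A : ι → Matrix α β R) (i : ι) :
    mode3 (tconj M A) M i = (mode3 A M i)ᴴ := by
  rw [tconj, mode3_mode3_inv hM]

lemma tUnitary.mode3_mem_unitaryGroup [Fintype α] [DecidableEq α] {Q : ι → Matrix α α R}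
    (hQ : tUnitary M Q) (hM : IsUnit M.det) (i : ι) : mode3 Q M i ∈ unitaryGroup α R := by
  have h := congrFun (congrArg (mode3 · M) hQ.1) i
  simp only [mode3_tprodM hM, mode3_tconj hM, tId, mode3_mode3_inv hM] at h
  exact mem_unitaryGroup_iff'.mpr h

lemma isUnit_det_smul_of_mem_unitaryGroup {W : Matrix ι ι R} (hW : W ∈ unitaryGroup ι R)
    {c : R} (hc : c ≠ 0) : IsUnit (c • W).det := by
  rw [det_smul]
  exact (hc.isUnit.pow _).mul (isUnit_det_of_left_inverse (mem_unitaryGroup_iff'.mp hW))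

end Transform

section FrobeniusNorm

variable [RCLike R] {α β γ δ ι : Type*} [Fintype α] [Fintype β] [Fintype γ] [Fintype δ]
  [Fintype ι]

lemma fnorm_nonneg (X : Matrix α β R) : 0 ≤ fnorm X := Real.sqrt_nonneg _

lemma fnorm_sq (X : Matrix α β R) : fnorm X ^ 2 = ∑ a, ∑ b, ‖X a b‖ ^ 2 :=
  Real.sq_sqrt (by positivity)

lemma tnorm_sq (A : ι → Matrix α β R) : tnorm A ^ 2 = ∑ i, fnorm (A i) ^ 2 :=
  Real.sq_sqrt (by positivity)

lemma tnorm_le_tnorm {A B : ι → Matrix α β R} (h : ∀ i, fnorm (A i) ^ 2 ≤ fnorm (B i) ^ 2) :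
    tnorm A ≤ tnorm B :=
  Real.sqrt_le_sqrt (Finset.sum_le_sum fun i _ => h i)

lemma fnorm_sq_eq_re_trace (X : Matrix α β R) : fnorm X ^ 2 = RCLike.re (Xᴴ * X).trace := by
  rw [fnorm_sq, Finset.sum_comm, trace, map_sum]
  refine Finset.sum_congr rfl fun b _ => ?_
  simp only [diag_apply, mul_apply, conjTranspose_apply, RCLike.star_def, RCLike.conj_mul,
    map_sum, RCLike.re_ofReal_pow]

lemma fnorm_mul_mul_conjTranspose [DecidableEq α] [DecidableEq β] {Q : Matrix γ α R}
    {P : Matrix δ β R} (hQ : Qᴴ * Q = 1) (hP : Pᴴ * P = 1) (X : Matrix α β R) :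
    fnorm (Q * X * Pᴴ) = fnorm X := by
  refine (pow_left_inj₀ (fnorm_nonneg _) (fnorm_nonneg _) two_ne_zero).mp ?_
  have hgram : (Q * X * Pᴴ)ᴴ * (Q * X * Pᴴ) = P * (Xᴴ * X) * Pᴴ := by
    simp only [conjTranspose_mul, conjTranspose_conjTranspose, Matrix.mul_assoc]
    rw [← Matrix.mul_assoc Qᴴ, hQ, Matrix.one_mul]
  rw [fnorm_sq_eq_re_trace, fnorm_sq_eq_re_trace, hgram, trace_mul_cycle, ← Matrix.mul_assoc, hP,
    Matrix.one_mul]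

lemma sum_norm_sq_mulVec_of_mem_unitaryGroup [DecidableEq ι] {W : Matrix ι ι R}
    (hW : W ∈ unitaryGroup ι R) (v : ι → R) : ∑ i, ‖(W *ᵥ v) i‖ ^ 2 = ∑ i, ‖v i‖ ^ 2 := by
  have hdot : ∀ u : ι → R, ∑ i, ‖u i‖ ^ 2 = RCLike.re (star u ⬝ᵥ u) := fun u => by
    simp only [dotProduct, Pi.star_apply, RCLike.star_def, RCLike.conj_mul, map_sum,
      RCLike.re_ofReal_pow]
  rw [hdot, hdot, star_mulVec, ← dotProduct_mulVec, mulVec_mulVec, ← star_eq_conjTranspose,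
    mem_unitaryGroup_iff'.mp hW, one_mulVec]

lemma tnorm_mode3_smul_of_mem_unitaryGroup [DecidableEq ι] {W : Matrix ι ι R}
    (hW : W ∈ unitaryGroup ι R) (c : R) (A : ι → Matrix α β R) :
    tnorm (mode3 A (c • W)) = ‖c‖ * tnorm A := by
  refine (pow_left_inj₀ (Real.sqrt_nonneg _) (mul_nonneg (norm_nonneg c) (Real.sqrt_nonneg _))
    two_ne_zero).mp ?_
  have hentry : ∀ i a b, mode3 A (c • W) i a b = c * (W *ᵥ fun j => A j a b) i := by
    simp [mode3, Matrix.sum_apply, mulVec, dotProduct, Finset.mul_sum, mul_assoc]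
  calc tnorm (mode3 A (c • W)) ^ 2
      = ∑ a, ∑ b, ‖c‖ ^ 2 * ∑ i, ‖(W *ᵥ fun j => A j a b) i‖ ^ 2 := by
        simp only [tnorm_sq, fnorm_sq, hentry, norm_mul, mul_pow, Finset.mul_sum]
        exact Finset.sum_comm.trans (Finset.sum_congr rfl fun a _ => Finset.sum_comm)
    _ = (‖c‖ * tnorm A) ^ 2 := by
        simp only [sum_norm_sq_mulVec_of_mem_unitaryGroup hW, mul_pow, tnorm_sq, fnorm_sq,
          Finset.mul_sum]
        exact (Finset.sum_comm.trans (Finset.sum_congr rfl fun a _ => Finset.sum_comm)).symm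

end FrobeniusNorm

section RectDiagonal

variable [RCLike R] {m p : ℕ}

def IsRectDiagonal (S : Matrix (Fin m) (Fin p) R) : Prop :=
  ∀ (a : Fin m) (b : Fin p), (a : ℕ) ≠ b → S a b = 0

def rectDiag (S : Matrix (Fin m) (Fin p) R) (j : Fin (min m p)) : R :=
  S (Fin.castLE (min_le_left m p) j) (Fin.castLE (min_le_right m p) j)

-- `j` is zero-based: the tail starts at the `(k+1)`-st singular value.
def tailNormSq (k : ℕ) (S : Matrix (Fin m) (Fin p) R) : ℝ :=
  ∑ j : Fin (min m p), if k ≤ (j : ℕ) then ‖rectDiag S j‖ ^ 2 else 0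

def leadingBlock (k : ℕ) (S : Matrix (Fin m) (Fin p) R) : Matrix (Fin m) (Fin p) R :=
  of fun a b => if (a : ℕ) < k ∧ (b : ℕ) < k then S a b else 0

lemma sum_sum_eq_sum_diag {N : Type*} [AddCommMonoid N] {g : Fin m → Fin p → N}
    (hg : ∀ (a : Fin m) (b : Fin p), (a : ℕ) ≠ b → g a b = 0) :
    ∑ a, ∑ b, g a b = ∑ j : Fin (min m p),
      g (Fin.castLE (min_le_left m p) j) (Fin.castLE (min_le_right m p) j) := by
  let diag : Fin (min m p) ↪ Fin m × Fin p :=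
    ⟨fun j => (Fin.castLE (min_le_left m p) j, Fin.castLE (min_le_right m p) j),
      fun j j' h => Fin.ext (by simpa using congrArg (fun x => (x.1 : ℕ)) h)⟩
  rw [← Fintype.sum_prod_type', ← Finset.sum_subset (Finset.subset_univ (Finset.univ.map diag)),
    Finset.sum_map]
  · rfl
  rintro ⟨a, b⟩ - hab
  refine hg a b fun h => hab (Finset.mem_map.mpr ⟨⟨a, lt_min a.2 (h ▸ b.2)⟩, by simp, ?_⟩)
  exact Prod.ext (Fin.ext rfl) (Fin.ext h)

lemma IsRectDiagonal.sub_leadingBlock {S : Matrix (Fin m) (Fin p) R} (hS : IsRectDiagonal S)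
    (k : ℕ) : IsRectDiagonal (S - leadingBlock k S) := fun a b hab => by
  simp [leadingBlock, hS a b hab]

lemma IsRectDiagonal.fnorm_sq_eq_sum_rectDiag {S : Matrix (Fin m) (Fin p) R}
    (hS : IsRectDiagonal S) : fnorm S ^ 2 = ∑ j, ‖rectDiag S j‖ ^ 2 := by
  rw [fnorm_sq, sum_sum_eq_sum_diag fun a b hab => by simp [hS a b hab]]
  rfl

lemma IsRectDiagonal.fnorm_sub_leadingBlock_sq {S : Matrix (Fin m) (Fin p) R}
    (hS : IsRectDiagonal S) (k : ℕ) : fnorm (S - leadingBlock k S) ^ 2 = tailNormSq k S := by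
  rw [(hS.sub_leadingBlock k).fnorm_sq_eq_sum_rectDiag]
  refine Finset.sum_congr rfl fun j _ => ?_
  by_cases hj : k ≤ (j : ℕ)
  · simp [rectDiag, leadingBlock, hj, not_lt.mpr hj]
  · simp [rectDiag, leadingBlock, hj, not_le.mp hj]

lemma truncSlice_eq (k : ℕ) (Uh : Matrix (Fin m) (Fin m) R) (S : Matrix (Fin m) (Fin p) R)
    (Vh : Matrix (Fin p) (Fin p) R) : truncSlice k Uh S Vh = Uh * leadingBlock k S * Vhᴴ := by
  ext a b
  simp only [truncSlice, leadingBlock, of_apply, mul_apply, conjTranspose_apply, Finset.sum_mul]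
  rw [Finset.sum_comm]
  refine Finset.sum_congr rfl fun j _ => Finset.sum_congr rfl fun l _ => ?_
  split_ifs <;> simp

lemma antitone_norm_rectDiag {S : Matrix (Fin m) (Fin p) R}
    (hreal : ∀ (a : Fin m) (b : Fin p), (a : ℕ) = b → ∃ r : ℝ, 0 ≤ r ∧ S a b = r)
    (hanti : ∀ (a a' : Fin m) (b b' : Fin p), (a : ℕ) = b → (a' : ℕ) = b' → (a : ℕ) ≤ a' →
      RCLike.re (S a' b') ≤ RCLike.re (S a b)) :
    Antitone fun j => ‖rectDiag S j‖ := by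
  have hnorm : ∀ j, ‖rectDiag S j‖ = RCLike.re (rectDiag S j) := fun j => by
    obtain ⟨r, hr, hS⟩ :=
      hreal (Fin.castLE (min_le_left m p) j) (Fin.castLE (min_le_right m p) j) rfl
    simp [rectDiag, hS, abs_of_nonneg hr]
  intro j j' hjj'
  simp only [hnorm]
  exact hanti _ _ _ _ (by simp) (by simp) (by simpa using hjj')

end RectDiagonal

lemma sum_comp_le_sum_of_injective {ι κ : Type*} [Fintype ι] [Fintype κ] {g : ι → κ}
    (hg : Function.Injective g) {f : κ → ℝ} (hf : ∀ b, 0 ≤ f b) : ∑ i, f (g i) ≤ ∑ b, f b :=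
  (Finset.sum_map Finset.univ ⟨g, hg⟩ f).symm.trans_le (Finset.sum_le_univ_sum_of_nonneg hf)

lemma sum_tail_le_sum_mul_one_sub {N k : ℕ} {s t : Fin N → ℝ} (hs : Antitone s)
    (hs0 : ∀ j, 0 ≤ s j) (ht0 : ∀ j, 0 ≤ t j) (ht1 : ∀ j, t j ≤ 1) (hsum : ∑ j, t j ≤ k) :
    ∑ j : Fin N, (if k ≤ (j : ℕ) then s j else 0) ≤ ∑ j, s j * (1 - t j) := by
  -- `c` lies between the tail values `s j, k ≤ j` and the head values `s j, j < k`
  set c : ℝ := if h : k < N then s ⟨k, h⟩ else 0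
  have hc0 : 0 ≤ c := by unfold c; split_ifs <;> simp [hs0]
  have hterm : ∀ j : Fin N, (if k ≤ (j : ℕ) then s j else 0) - s j * (1 - t j) ≤
      c * (t j - if (j : ℕ) < k then 1 else 0) := fun j => by
    by_cases hj : k ≤ (j : ℕ)
    · have hk : k < N := hj.trans_lt j.2
      have : s j ≤ c := by simpa [c, hk] using hs (show (⟨k, hk⟩ : Fin N) ≤ j from hj)
      simp only [if_pos hj, if_neg (not_lt.mpr hj)]
      nlinarith [mul_le_mul_of_nonneg_right this (ht0 j)]
    · have : c ≤ s j := by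
        unfold c; split_ifs with hk
        · exact hs (show j ≤ ⟨k, hk⟩ from (not_le.mp hj).le)
        · exact hs0 j
      simp only [if_neg hj, if_pos (not_le.mp hj)]
      nlinarith [mul_le_mul_of_nonneg_right this (sub_nonneg.mpr (ht1 j))]
  have hcount : ∑ j, t j ≤ ∑ j : Fin N, if (j : ℕ) < k then (1 : ℝ) else 0 := by
    rw [Finset.sum_boole, Fin.card_filter_val_lt]
    have hN : ∑ j, t j ≤ N := by simpa using Finset.sum_le_sum fun j (_ : j ∈ Finset.univ) => ht1 j
    push_cast
    exact le_min hN hsum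
  have hsum_terms := Finset.sum_le_sum fun j (_ : j ∈ Finset.univ) => hterm j
  rw [Finset.sum_sub_distrib, ← Finset.mul_sum, Finset.sum_sub_distrib] at hsum_terms
  linarith [mul_nonpos_of_nonneg_of_nonpos hc0 (sub_nonpos.mpr hcount)]

section Projection

open scoped InnerProductSpace

variable {𝕜 E : Type*} [RCLike 𝕜] [NormedAddCommGroup E] [InnerProductSpace 𝕜 E]

lemma sum_norm_sq_starProjection_eq_finrank {ι : Type*} [Fintype ι] [FiniteDimensional 𝕜 E]
    (K : Submodule 𝕜 E) (b : OrthonormalBasis ι 𝕜 E) :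
    ∑ i, ‖K.starProjection (b i)‖ ^ 2 = Module.finrank 𝕜 K := by
  let c := stdOrthonormalBasis 𝕜 K
  have hproj : ∀ x, ‖K.starProjection x‖ ^ 2 = ∑ l, ‖⟪(c l : E), x⟫_𝕜‖ ^ 2 := fun x => by
    rw [Submodule.starProjection_apply, ← Submodule.coe_norm, ← c.sum_sq_norm_inner_right]
    simp only [Submodule.inner_orthogonalProjectionOnto_eq_of_mem_left]
  simp only [hproj]
  rw [Finset.sum_comm]
  simp [b.sum_sq_norm_inner_left, ← Submodule.coe_norm, c.orthonormal.1]

lemma norm_sq_sub_norm_sq_starProjection_le (K : Submodule 𝕜 E) [K.HasOrthogonalProjection]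
    (x : E) {v : E} (hv : v ∈ K) : ‖x‖ ^ 2 - ‖K.starProjection x‖ ^ 2 ≤ ‖x - v‖ ^ 2 := by
  have hpyth := K.norm_sq_eq_add_norm_sq_starProjection x
  rw [K.starProjection_orthogonal] at hpyth
  have hmin : ‖x - K.starProjection x‖ ≤ ‖x - v‖ :=
    (K.starProjection_minimal x).trans_le
      (ciInf_le (f := fun w : K => ‖x - w‖) ⟨0, by rintro _ ⟨w, rfl⟩; positivity⟩ ⟨v, hv⟩)
  simp only [_root_.sub_apply, ContinuousLinearMap.id_apply] at hpyth
  nlinarith [pow_le_pow_left₀ (norm_nonneg _) hmin 2]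

end Projection

section EckartYoung

variable [RCLike R] {m p : ℕ}

theorem IsRectDiagonal.tailNormSq_le_fnorm_sub_sq {k : ℕ} {S C : Matrix (Fin m) (Fin p) R}
    (hS : IsRectDiagonal S) (hanti : Antitone fun j => ‖rectDiag S j‖) (hC : C.rank ≤ k) :
    tailNormSq k S ≤ fnorm (S - C) ^ 2 := by
  let K : Submodule R (EuclideanSpace R (Fin m)) :=
    (Submodule.span R (Set.range C.col)).map (WithLp.linearEquiv 2 R (Fin m → R)).symm.toLinearMap
  have hK : Module.finrank R K ≤ k := by
    rw [LinearEquiv.finrank_map_eq, ← rank_eq_finrank_span_cols]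
    exact hC
  let e := EuclideanSpace.basisFun (Fin m) R
  let rowOf : Fin (min m p) → Fin m := Fin.castLE (min_le_left m p)
  let colOf : Fin (min m p) → Fin p := Fin.castLE (min_le_right m p)
  let t : Fin (min m p) → ℝ := fun j => ‖K.starProjection (e (rowOf j))‖ ^ 2
  have ht1 : ∀ j, t j ≤ 1 := fun j => by
    simpa [t, e] using
      pow_le_pow_left₀ (norm_nonneg _) (K.norm_starProjection_apply_le (e (rowOf j))) 2
  have htk : ∑ j, t j ≤ k := calc
    ∑ j, t j ≤ ∑ a, ‖K.starProjection (e a)‖ ^ 2 :=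
      sum_comp_le_sum_of_injective (f := fun a => ‖K.starProjection (e a)‖ ^ 2)
        (Fin.castLE_injective _) fun _ => sq_nonneg _
    _ = Module.finrank R K := sum_norm_sq_starProjection_eq_finrank K e
    _ ≤ k := Nat.cast_le.mpr hK
  have hcolumn : ∀ j, ‖rectDiag S j‖ ^ 2 * (1 - t j) ≤ ∑ a, ‖(S - C) a (colOf j)‖ ^ 2 := by
    intro j
    have hSj : WithLp.toLp 2 (Sᵀ (colOf j)) = rectDiag S j • e (rowOf j) := by
      ext a
      by_cases ha : a = rowOf j
      · subst ha; simp [e, rectDiag, rowOf, colOf]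
      · simp [e, hS a (colOf j) fun h => ha (Fin.ext h), ha]
    have hCj : WithLp.toLp 2 (Cᵀ (colOf j)) ∈ K :=
      Submodule.mem_map_of_mem (Submodule.subset_span ⟨colOf j, rfl⟩)
    have hlhs : ‖rectDiag S j • e (rowOf j)‖ ^ 2
        - ‖K.starProjection (rectDiag S j • e (rowOf j))‖ ^ 2 = ‖rectDiag S j‖ ^ 2 * (1 - t j) := by
      simp only [map_smul, norm_smul, mul_pow, e.orthonormal.1 (rowOf j), t]
      ring
    have hrhs : ‖rectDiag S j • e (rowOf j) - WithLp.toLp 2 (Cᵀ (colOf j))‖ ^ 2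
        = ∑ a, ‖(S - C) a (colOf j)‖ ^ 2 := by
      rw [← hSj, ← WithLp.toLp_sub, EuclideanSpace.norm_sq_eq]
      rfl
    rw [← hlhs, ← hrhs]
    exact norm_sq_sub_norm_sq_starProjection_le K _ hCj
  calc tailNormSq k S ≤ ∑ j, ‖rectDiag S j‖ ^ 2 * (1 - t j) :=
        sum_tail_le_sum_mul_one_sub (fun i j hij => pow_le_pow_left₀ (norm_nonneg _) (hanti hij) 2)
          (fun _ => sq_nonneg _) (fun _ => sq_nonneg _) ht1 htk
    _ ≤ ∑ j, ∑ a, ‖(S - C) a (colOf j)‖ ^ 2 := Finset.sum_le_sum fun j _ => hcolumn j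
    _ ≤ ∑ b, ∑ a, ‖(S - C) a b‖ ^ 2 :=
        sum_comp_le_sum_of_injective (f := fun b => ∑ a, ‖(S - C) a b‖ ^ 2)
          (Fin.castLE_injective _) fun _ => by positivity
    _ = fnorm (S - C) ^ 2 := by rw [fnorm_sq, Finset.sum_comm]

end EckartYoung

section Slice

variable [RCLike R] {m p : ℕ} {Uh : Matrix (Fin m) (Fin m) R} {Vh : Matrix (Fin p) (Fin p) R}
  {S : Matrix (Fin m) (Fin p) R}

theorem fnorm_mul_mul_sub_truncSlice_sq (hU : Uh ∈ unitaryGroup (Fin m) R)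
    (hV : Vh ∈ unitaryGroup (Fin p) R) (hS : IsRectDiagonal S) (k : ℕ) :
    fnorm (Uh * S * Vhᴴ - truncSlice k Uh S Vh) ^ 2 = tailNormSq k S := by
  rw [truncSlice_eq, ← Matrix.sub_mul, ← Matrix.mul_sub,
    fnorm_mul_mul_conjTranspose (mem_unitaryGroup_iff'.mp hU) (mem_unitaryGroup_iff'.mp hV),
    hS.fnorm_sub_leadingBlock_sq]

theorem tailNormSq_le_fnorm_mul_mul_sub_sq (hU : Uh ∈ unitaryGroup (Fin m) R)
    (hV : Vh ∈ unitaryGroup (Fin p) R) (hS : IsRectDiagonal S)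
    (hanti : Antitone fun j => ‖rectDiag S j‖) {k : ℕ} {B : Matrix (Fin m) (Fin p) R}
    (hB : B.rank ≤ k) : tailNormSq k S ≤ fnorm (Uh * S * Vhᴴ - B) ^ 2 := by
  have hB' : B = Uh * (Uhᴴ * B * Vh) * Vhᴴ := by
    rw [← Matrix.mul_assoc, ← Matrix.mul_assoc, ← star_eq_conjTranspose,
      mem_unitaryGroup_iff.mp hU, Matrix.one_mul, Matrix.mul_assoc, ← star_eq_conjTranspose,
      mem_unitaryGroup_iff.mp hV, Matrix.mul_one]
  rw [hB', ← Matrix.sub_mul, ← Matrix.mul_sub,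
    fnorm_mul_mul_conjTranspose (mem_unitaryGroup_iff'.mp hU) (mem_unitaryGroup_iff'.mp hV)]
  exact hS.tailNormSq_le_fnorm_sub_sq hanti
    ((rank_mul_le_left _ _).trans ((rank_mul_le_right _ _).trans hB))

end Slice

theorem stmt6_general {n m p : ℕ}
    (W : Matrix (Fin n) (Fin n) ℂ) (hW : W ∈ Matrix.unitaryGroup (Fin n) ℂ)
    (c : ℂ) (hc : c ≠ 0)
    (A : Fin n → Matrix (Fin m) (Fin p) ℂ)
    (U : Fin n → Matrix (Fin m) (Fin m) ℂ)
    (S : Fin n → Matrix (Fin m) (Fin p) ℂ)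
    (V : Fin n → Matrix (Fin p) (Fin p) ℂ)
    (h : IsTSVDM (c • W) A U S V)
    (ρ : Fin n → ℕ) :
    (tnorm (fun i => A i - truncTensor (c • W) U S V ρ i) ^ 2 =
      (1 / ‖c‖ ^ 2) * ∑ i : Fin n, ∑ j : Fin (min m p),
        if ρ i ≤ (j : ℕ) then
          ‖mode3 S (c • W) i (Fin.castLE (min_le_left m p) j)
            (Fin.castLE (min_le_right m p) j)‖ ^ 2
        else 0) ∧
    ∀ B : Fin n → Matrix (Fin m) (Fin p) ℂ,
      (∀ i, Matrix.rank (mode3 B (c • W) i) ≤ ρ i) →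
      tnorm (fun i => A i - truncTensor (c • W) U S V ρ i) ≤
        tnorm (fun i => A i - B i) := by
  obtain ⟨hA, hU, hV, hSdiag, hSreal, hSanti⟩ := h
  have hM := isUnit_det_smul_of_mem_unitaryGroup hW hc
  have hUhat := hU.mode3_mem_unitaryGroup hM
  have hVhat := hV.mode3_mem_unitaryGroup hM
  have hc₀ : 0 < ‖c‖ := norm_pos_iff.mpr hc
  have hresidual : ∀ i, fnorm (mode3 (fun i => A i - truncTensor (c • W) U S V ρ i) (c • W) i) ^ 2
      = tailNormSq (ρ i) (mode3 S (c • W) i) := fun i => by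
    rw [mode3_sub, hA, mode3_tprodM hM, mode3_tprodM hM, mode3_tconj hM, truncTensor,
      mode3_mode3_inv hM]
    exact fnorm_mul_mul_sub_truncSlice_sq (hUhat i) (hVhat i) (hSdiag i) (ρ i)
  refine ⟨?_, fun B hB => ?_⟩
  · have hscale := tnorm_mode3_smul_of_mem_unitaryGroup hW c
      fun i => A i - truncTensor (c • W) U S V ρ i
    have hsum : ∑ i, tailNormSq (ρ i) (mode3 S (c • W) i)
        = (‖c‖ * tnorm fun i => A i - truncTensor (c • W) U S V ρ i) ^ 2 := by
      rw [← hscale, tnorm_sq]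
      exact Finset.sum_congr rfl fun i _ => (hresidual i).symm
    change _ = 1 / ‖c‖ ^ 2 * ∑ i, tailNormSq (ρ i) (mode3 S (c • W) i)
    rw [hsum]
    field_simp
  · refine le_of_mul_le_mul_left ?_ hc₀
    rw [← tnorm_mode3_smul_of_mem_unitaryGroup hW, ← tnorm_mode3_smul_of_mem_unitaryGroup hW]
    refine tnorm_le_tnorm fun i => ?_
    rw [hresidual, mode3_sub, hA, mode3_tprodM hM, mode3_tprodM hM, mode3_tconj hM]
    exact tailNormSq_le_fnorm_mul_mul_sub_sq (hUhat i) (hVhat i) (hSdiag i)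
      (antitone_norm_rectDiag (hSreal i) (hSanti i)) (hB i)

/-- optimality of the multi-rank truncation, t-SVDMII:
`‖A − A_ρ‖² = (1/|c|²) ∑_i ∑_{j ≥ ρ i} (σⱼ⁽ⁱ⁾)²` and `A_ρ` is optimal among all tensors
whose transform-domain slices have rank at most `ρ i`. -/
theorem stmt6 {n m p : ℕ}
    (W : Matrix (Fin n) (Fin n) ℂ) (hW : W ∈ Matrix.unitaryGroup (Fin n) ℂ)
    (c : ℂ) (hc : c ≠ 0)
    (A : Fin n → Matrix (Fin m) (Fin p) ℂ)
    (U : Fin n → Matrix (Fin m) (Fin m) ℂ)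
    (S : Fin n → Matrix (Fin m) (Fin p) ℂ)
    (V : Fin n → Matrix (Fin p) (Fin p) ℂ)
    (h : IsTSVDM (c • W) A U S V)
    (ρ : Fin n → ℕ) (hρ : ∀ i, ρ i ≤ min m p) :
    (tnorm (fun i => A i - truncTensor (c • W) U S V ρ i) ^ 2 =
      (1 / ‖c‖ ^ 2) * ∑ i : Fin n, ∑ j : Fin (min m p),
        if ρ i ≤ (j : ℕ) then
          ‖mode3 S (c • W) i (Fin.castLE (min_le_left m p) j)
            (Fin.castLE (min_le_right m p) j)‖ ^ 2
        else 0) ∧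
    ∀ B : Fin n → Matrix (Fin m) (Fin p) ℂ,
      (∀ i, Matrix.rank (mode3 B (c • W) i) ≤ ρ i) →
      tnorm (fun i => A i - truncTensor (c • W) U S V ρ i) ≤
        tnorm (fun i => A i - B i) :=
  stmt6_general W hW c hc A U S V h ρ
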